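/- (Weak dependence of score on mixing proportions.) Fix μ₁ ∈ ℝ, σ > 0, two mixing proportions π, π' ∈ (0,1), and x ∈ ℝ. Writing p_{μ₂,π}(x) = π φ_{μ₁,σ}(x) + (1−π) φ_{μ₂,σ}(x), one has s_{p_{μ₂,π}}(x) − s_{p_{μ₂,π'}}(x) → 0 as μ₂ → +∞. -/

import Mathlib

/-! The score of a mixture is `p' / p`. As `μ₂ → ∞`, both the far component `φ_{μ₂,σ}(x)` and
its derivative `(μ₂ - x) / σ² · φ_{μ₂,σ}(x)` vanish, since Gaussian decay beats polynomial growth.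
Hence the score of `π φ_{μ₁,σ} + (1 - π) φ_{μ₂,σ}` at `x` tends to the score of `π φ_{μ₁,σ}`,
which does not depend on `π`. -/

open MeasureTheory Filter

/-- Gaussian density with mean `μ` and standard deviation `σ`. -/
noncomputable def gaussian (μ σ : ℝ) (x : ℝ) : ℝ :=
  (σ * Real.sqrt (2 * Real.pi))⁻¹ * Real.exp (-(x - μ) ^ 2 / (2 * σ ^ 2))

/-- The score of a density `ρ`: the derivative of its log. -/
noncomputable def score (ρ : ℝ → ℝ) (x : ℝ) : ℝ :=
  deriv (fun y => Real.log (ρ y)) x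

/-- Fisher divergence between densities `q` and `p`. -/
noncomputable def fisherDiv (q p : ℝ → ℝ) : ℝ :=
  ∫ x : ℝ, q x * (score q x - score p x) ^ 2

open Real Topology

lemma gaussian_ne_zero {σ : ℝ} (hσ : σ ≠ 0) (μ x : ℝ) : gaussian μ σ x ≠ 0 := by
  unfold gaussian
  have : Real.sqrt (2 * π) ≠ 0 := by positivity
  positivity

lemma hasDerivAt_gaussian (μ σ x : ℝ) :
    HasDerivAt (gaussian μ σ) ((μ - x) / σ ^ 2 * gaussian μ σ x) x := by
  have hexponent : HasDerivAt (fun y => -(y - μ) ^ 2 / (2 * σ ^ 2)) ((μ - x) / σ ^ 2) x :=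
    ((((hasDerivAt_id x).sub_const μ).pow 2).neg.div_const (2 * σ ^ 2)).congr_deriv
      (by simp only [id]; ring)
  exact (hexponent.exp.const_mul (σ * Real.sqrt (2 * π))⁻¹).congr_deriv (by unfold gaussian; ring)

lemma gaussian_eq_mul_exp (μ σ x : ℝ) :
    gaussian μ σ x = (σ * Real.sqrt (2 * π))⁻¹ * exp (-(2 * σ ^ 2)⁻¹ * (μ - x) ^ 2) := by
  unfold gaussian
  congr 2
  ring

lemma tendsto_rpow_abs_mul_gaussian_cocompact {σ : ℝ} (hσ : σ ≠ 0) (x s : ℝ) :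
    Tendsto (fun μ => |μ - x| ^ s * gaussian μ σ x) (cocompact ℝ) (𝓝 0) := by
  have hshift : Tendsto (fun μ : ℝ => μ - x) (cocompact ℝ) (cocompact ℝ) :=
    (Homeomorph.subRight x).map_cocompact.le
  have hdecay := ((tendsto_rpow_abs_mul_exp_neg_mul_sq_cocompact (a := (2 * σ ^ 2)⁻¹)
    (by positivity) s).comp hshift).const_mul (σ * Real.sqrt (2 * π))⁻¹
  rw [mul_zero] at hdecay
  refine hdecay.congr fun μ => ?_
  simp only [Function.comp_apply, gaussian_eq_mul_exp]
  ring

lemma tendsto_gaussian_cocompact {σ : ℝ} (hσ : σ ≠ 0) (x : ℝ) :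
    Tendsto (fun μ => gaussian μ σ x) (cocompact ℝ) (𝓝 0) := by
  simpa using tendsto_rpow_abs_mul_gaussian_cocompact hσ x 0

lemma tendsto_sub_mul_gaussian_cocompact {σ : ℝ} (hσ : σ ≠ 0) (x : ℝ) :
    Tendsto (fun μ => (μ - x) * gaussian μ σ x) (cocompact ℝ) (𝓝 0) := by
  have := (tendsto_rpow_abs_mul_gaussian_cocompact hσ x 1).abs
  rw [abs_zero] at this
  refine (tendsto_zero_iff_abs_tendsto_zero _).2 (this.congr fun μ => ?_)
  simp [abs_mul]

lemma score_eq_div_of_hasDerivAt {ρ : ℝ → ℝ} {ρ' x : ℝ} (hρ : HasDerivAt ρ ρ' x) (hx : ρ x ≠ 0) :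
    score ρ x = ρ' / ρ x :=
  (hρ.log hx).deriv

theorem tendsto_score_add_mul_gaussian_cocompact {f : ℝ → ℝ} {f' x : ℝ} (hf : HasDerivAt f f' x)
    (hfx : f x ≠ 0) (b : ℝ) {σ : ℝ} (hσ : σ ≠ 0) :
    Tendsto (fun μ => score (fun y => f y + b * gaussian μ σ y) x) (cocompact ℝ)
      (𝓝 (f' / f x)) := by
  have hden : Tendsto (fun μ => f x + b * gaussian μ σ x) (cocompact ℝ) (𝓝 (f x)) := by
    simpa using ((tendsto_gaussian_cocompact hσ x).const_mul b).const_add (f x)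
  have hnum : Tendsto (fun μ => f' + b * ((μ - x) / σ ^ 2 * gaussian μ σ x)) (cocompact ℝ)
      (𝓝 f') := by
    have := ((tendsto_sub_mul_gaussian_cocompact hσ x).const_mul (b / σ ^ 2)).const_add f'
    rw [mul_zero, add_zero] at this
    exact this.congr fun μ => by ring
  refine (hnum.div hden hfx).congr' ?_
  filter_upwards [hden.eventually_ne hfx] with μ hμ
  exact (score_eq_div_of_hasDerivAt (hf.add ((hasDerivAt_gaussian μ σ x).const_mul b)) hμ).symm

/-- weak dependence of the score on mixing proportions, separated
components limit: the score difference between two mixtures with different mixing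
proportions vanishes as `μ₂ → +∞`. -/
theorem score_weak_dependence_on_proportion_separation (μ₁ σ w w' : ℝ) (hσ : 0 < σ)
    (hw : w ∈ Set.Ioo (0 : ℝ) 1) (hw' : w' ∈ Set.Ioo (0 : ℝ) 1) (x : ℝ) :
    Tendsto
      (fun μ₂ => score (fun y => w * gaussian μ₁ σ y + (1 - w) * gaussian μ₂ σ y) x
        - score (fun y => w' * gaussian μ₁ σ y + (1 - w') * gaussian μ₂ σ y) x)
      atTop (nhds 0) := by
  have hφ₁ := gaussian_ne_zero hσ.ne' μ₁ x
  have hlimit (v : ℝ) (hv : v ≠ 0) :=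
    tendsto_score_add_mul_gaussian_cocompact ((hasDerivAt_gaussian μ₁ σ x).const_mul v)
      (mul_ne_zero hv hφ₁) (1 - v) hσ.ne'
  have := ((hlimit w hw.1.ne').sub (hlimit w' hw'.1.ne')).mono_left atTop_le_cocompact
  rwa [mul_div_mul_left _ _ hw.1.ne', mul_div_mul_left _ _ hw'.1.ne', sub_self] at this
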